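/- In a multiplicative hom-associative algebra (A, μ, α), for f ∈ C^m_α(A,A) and g ∈ Cⁿ_α(A,A), the Gerstenhaber bracket satisfies δ_α[f,g]_α = (-1)^{n+1} [δ_α f, g]_α + [f, δ_α g]_α. -/

import Mathlib

/-- Reindex a tuple along an equality of lengths. -/
def reindex {A : Type*} {p q : ℕ} (h : q = p) (a : Fin p → A) : Fin q → A :=
  fun k => a (Fin.cast h k)

/-- `f` commutes with `α`, i.e. `α ∘ f = f ∘ α^{⊗n}` (membership condition for `Cⁿ_α`/`V^α`). -/
def IsCompat {A : Type*} (α : A → A) {n : ℕ} (f : (Fin n → A) → A) : Prop :=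
  ∀ a : Fin n → A, α (f a) = f fun i => α (a i)

/-- The α-twisted Hochschild coboundary on `n`-cochains. -/
def homDelta {A : Type*} [AddCommGroup A] (μ : A → A → A) (α : A → A) (n : ℕ)
    (f : (Fin n → A) → A) : (Fin (n + 1) → A) → A := fun a =>
  μ (α^[n - 1] (a 0)) (f fun i => a i.succ)
    + ∑ i : Fin n, ((-1 : ℤ) ^ ((i : ℕ) + 1)) •
        f (fun j => if (j : ℕ) < (i : ℕ) then α (a j.castSucc)
          else if (j : ℕ) = (i : ℕ) then μ (a j.castSucc) (a j.succ)
          else α (a j.succ))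
    + ((-1 : ℤ) ^ (n + 1)) • μ (f fun i => a i.castSucc) (α^[n - 1] (a (Fin.last n)))

/-- The α-twisted insertion `f ∘ᵢ g` for `f ∈ V^α_m`, `g ∈ V^α_n`. -/
def circI {A : Type*} (α : A → A) {m n : ℕ} (i : Fin (m + 1))
    (f : (Fin (m + 1) → A) → A) (g : (Fin (n + 1) → A) → A) :
    (Fin (m + n + 1) → A) → A := fun a =>
  f fun k => if (k : ℕ) < (i : ℕ) then α^[n] (a ⟨(k : ℕ), by omega⟩)
    else if (k : ℕ) = (i : ℕ) then g (fun l => a ⟨(i : ℕ) + (l : ℕ), by omega⟩)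
    else α^[n] (a ⟨(k : ℕ) + n, by omega⟩)

/-- The α-twisted pre-Lie product `f ∘ g = Σᵢ (-1)^{ni} f ∘ᵢ g`. -/
def vcirc {A : Type*} [AddCommGroup A] (α : A → A) {m n : ℕ}
    (f : (Fin (m + 1) → A) → A) (g : (Fin (n + 1) → A) → A) :
    (Fin (m + n + 1) → A) → A := fun a =>
  ∑ i : Fin (m + 1), ((-1 : ℤ) ^ (n * (i : ℕ))) • circI α i f g a

/-- The graded (Gerstenhaber) bracket `[f,g] = f ∘ g - (-1)^{mn} g ∘ f` on `⊕ V^α_m`. -/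
def vbracket {A : Type*} [AddCommGroup A] (α : A → A) {m n : ℕ}
    (f : (Fin (m + 1) → A) → A) (g : (Fin (n + 1) → A) → A) :
    (Fin (m + n + 1) → A) → A := fun a =>
  vcirc α f g a - ((-1 : ℤ) ^ (m * n)) • vcirc α g f (reindex (by omega) a)

/-- The cup product of an `(m+1)`-cochain and an `(n+1)`-cochain. -/
def cupProd {A : Type*} (μ : A → A → A) (α : A → A) {m n : ℕ}
    (f : (Fin (m + 1) → A) → A) (g : (Fin (n + 1) → A) → A) :
    (Fin (m + n + 2) → A) → A := fun a =>
  μ (α^[n] (f fun i => a ⟨(i : ℕ), by omega⟩))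
    (α^[m] (g fun i => a ⟨m + 1 + (i : ℕ), by omega⟩))

/-!
Regard the multiplication as the 2-cochain `(a, b) ↦ μ a b`; then the twisted coboundary of a
cochain `F` is `δ_α F = -[F, μ]_α`. The twisted composition is right pre-Lie on cochains
commuting with `α`: in `(f ∘ g) ∘ h` the terms where `h` is inserted into `g` add up to
`f ∘ (g ∘ h)`, while the terms where `g` and `h` sit in disjoint slots of `f` are, up to the
sign `(-1)^{|g||h|}`, those of `(f ∘ h) ∘ g`; moving the `α`-powers past `g` and `h` is where
compatibility enters. Hence `[-,-]_α` satisfies the graded Jacobi identity, which for `h = μ` is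
the Leibniz rule.
-/

open Function Finset

section Insertion

variable {A : Type*}

lemma IsCompat.iterate {α : A → A} {N : ℕ} {g : (Fin N → A) → A} (hg : IsCompat α g)
    (k : ℕ) (x : Fin N → A) : α^[k] (g x) = g fun i => α^[k] (x i) := by
  induction k with
  | zero => rfl
  | succ k ih => simp only [iterate_succ_apply', ih, hg _]

lemma reindex_reindex {p q r : ℕ} (h₁ : q = p) (h₂ : r = q) (a : Fin p → A) :
    reindex h₂ (reindex h₁ a) = reindex (h₂.trans h₁) a := rfl

lemma reindex_rfl {p : ℕ} (h : p = p) (a : Fin p → A) : reindex h a = a := rfl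

variable (α : A → A) {m n p : ℕ}

lemma circI_circI_of_le (f : (Fin (m + 1) → A) → A) (g : (Fin (n + 1) → A) → A)
    (h : (Fin (p + 1) → A) → A) (i q : ℕ) (hi : i ≤ m) (hq : q ≤ n)
    (a : Fin (m + n + p + 1) → A) :
    circI α (⟨i + q, by omega⟩ : Fin (m + n + 1))
        (circI α (⟨i, by omega⟩ : Fin (m + 1)) f g) h a
      = circI α (⟨i, by omega⟩ : Fin (m + 1)) f
          (circI α (⟨q, by omega⟩ : Fin (n + 1)) g h) (reindex (by omega) a) := by
  simp only [circI, reindex, Fin.cast_mk]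
  congr 1
  funext k
  rcases Nat.lt_trichotomy (k : ℕ) i with hk | rfl | hk
  · simp [hk, show (k : ℕ) < i + q by omega, iterate_add_apply]
  · simp only [lt_irrefl, if_false, if_true]
    congr 1
    funext l
    rcases Nat.lt_trichotomy (l : ℕ) q with hl | rfl | hl
    · simp [hl]
    · simp [Nat.add_assoc]
    · simp [show ¬(l : ℕ) < q by omega, show (l : ℕ) ≠ q by omega, Nat.add_assoc]
  · simp [show ¬(k : ℕ) < i by omega, show (k : ℕ) ≠ i by omega,
      show ¬(k : ℕ) + n < i + q by omega, show (k : ℕ) + n ≠ i + q by omega,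
      ← iterate_add_apply, Nat.add_comm n p, Nat.add_assoc]

lemma circI_circI_of_lt (f : (Fin (m + 1) → A) → A) {g : (Fin (n + 1) → A) → A}
    {h : (Fin (p + 1) → A) → A} (hg : IsCompat α g) (hh : IsCompat α h) (i j : ℕ)
    (hi : i ≤ m) (hj : j < i) (a : Fin (m + n + p + 1) → A) :
    circI α (⟨j, by omega⟩ : Fin (m + n + 1))
        (circI α (⟨i, by omega⟩ : Fin (m + 1)) f g) h a
      = circI α (⟨i + p, by omega⟩ : Fin (m + p + 1))
          (circI α (⟨j, by omega⟩ : Fin (m + 1)) f h) g (reindex (by omega) a) := by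
  simp only [circI, reindex, Fin.cast_mk]
  congr 1
  funext k
  rcases Nat.lt_trichotomy (k : ℕ) j with hk | rfl | hk
  · simp [hk, show (k : ℕ) < i by omega, show (k : ℕ) < i + p by omega, ← iterate_add_apply,
      Nat.add_comm n p]
  · simp only [hj, ↓reduceIte, lt_self_iff_false, hh.iterate]
    congr 1
    funext l
    rw [if_pos (by omega)]
  rcases Nat.lt_trichotomy (k : ℕ) i with hk' | rfl | hk'
  · simp [hk', show ¬(k : ℕ) < j by omega, show (k : ℕ) ≠ j by omega, ← iterate_add_apply,
      Nat.add_comm n p]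
  · simp only [lt_self_iff_false, ↓reduceIte, Nat.add_assoc, show ¬(k : ℕ) < j by omega,
      show (k : ℕ) ≠ j by omega, hg.iterate]
    congr 1
    funext l
    simp only [show ¬(k : ℕ) + l < j by omega, show (k : ℕ) + l ≠ j by omega, ↓reduceIte,
      Nat.add_comm (l : ℕ) p]
  · simp [show ¬(k : ℕ) < j by omega, show (k : ℕ) ≠ j by omega,
      show ¬(k : ℕ) < i by omega, show (k : ℕ) ≠ i by omega,
      show ¬(k : ℕ) + n < j by omega, show (k : ℕ) + n ≠ j by omega,
      ← iterate_add_apply, Nat.add_right_comm _ n p, Nat.add_comm n p]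

-- The entry in slot `i` is irrelevant: `circI_eq_update` overwrites it.
def insertionFrame (i : Fin (m + 1)) (a : Fin (m + n + 1) → A) : Fin (m + 1) → A :=
  fun k => if (k : ℕ) < i then α^[n] (a ⟨k, by omega⟩) else α^[n] (a ⟨k + n, by omega⟩)

lemma circI_eq_update (i : Fin (m + 1)) (f : (Fin (m + 1) → A) → A)
    (g : (Fin (n + 1) → A) → A) (a : Fin (m + n + 1) → A) :
    circI α i f g a
      = f (update (insertionFrame α i a) i (g fun l => a ⟨i + l, by omega⟩)) := by
  unfold circI
  congr 1
  funext k
  rcases eq_or_ne k i with rfl | hk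
  · simp
  · have hk' : (k : ℕ) ≠ i := Fin.val_ne_of_ne hk
    simp [update_of_ne hk, insertionFrame, hk']

end Insertion

section Linearity

variable {R A : Type*} [CommSemiring R] [AddCommGroup A] [Module R A] (α : A → A) {m n p : ℕ}

def vcircLeftHom (g : (Fin (n + 1) → A) → A) (a : Fin (m + n + 1) → A) :
    ((Fin (m + 1) → A) → A) →+ A where
  toFun f := vcirc α f g a
  map_zero' := by simp [vcirc, circI]
  map_add' f f' := by simp [vcirc, circI, sum_add_distrib]

def vcircRightHom (f : MultilinearMap R (fun _ : Fin (m + 1) => A) A)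
    (a : Fin (m + n + 1) → A) : ((Fin (n + 1) → A) → A) →+ A where
  toFun g := vcirc α f g a
  map_zero' := by simp [vcirc, circI_eq_update]
  map_add' g g' := by simp [vcirc, circI_eq_update, f.map_update_add, sum_add_distrib]

@[simp] lemma vcircLeftHom_apply (g : (Fin (n + 1) → A) → A) (a : Fin (m + n + 1) → A)
    (f : (Fin (m + 1) → A) → A) : vcircLeftHom α g a f = vcirc α f g a := rfl

@[simp] lemma vcircRightHom_apply (f : MultilinearMap R (fun _ : Fin (m + 1) => A) A)
    (a : Fin (m + n + 1) → A) (g : (Fin (n + 1) → A) → A) :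
    vcircRightHom α f a g = vcirc α f g a := rfl

lemma vcirc_comp_reindex_left {m' : ℕ} (hm : m' = m) (f : (Fin (m' + 1) → A) → A)
    (g : (Fin (n + 1) → A) → A) (a : Fin (m + n + 1) → A) :
    vcirc α (f ∘ reindex (by omega)) g a = vcirc α f g (reindex (by omega) a) := by
  subst hm; rfl

lemma vcirc_comp_reindex_right {n' : ℕ} (hn : n' = n) (f : (Fin (m + 1) → A) → A)
    (g : (Fin (n' + 1) → A) → A) (a : Fin (m + n + 1) → A) :
    vcirc α f (g ∘ reindex (by omega)) a = vcirc α f g (reindex (by omega) a) := by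
  subst hn; rfl

lemma vbracket_eq_sub (f : (Fin (m + 1) → A) → A) (g : (Fin (n + 1) → A) → A) :
    vbracket α f g
      = vcirc α f g - ((-1 : ℤ) ^ (m * n)) • (vcirc α g f ∘ reindex (by omega)) := rfl

lemma vbracket_apply (f : (Fin (m + 1) → A) → A) (g : (Fin (n + 1) → A) → A)
    (a : Fin (m + n + 1) → A) :
    vbracket α f g a
      = vcirc α f g a - ((-1 : ℤ) ^ (m * n)) • vcirc α g f (reindex (by omega) a) := rfl

lemma vcirc_vbracket_left (f : (Fin (m + 1) → A) → A) (g : (Fin (n + 1) → A) → A)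
    (h : (Fin (p + 1) → A) → A) (a : Fin (m + n + p + 1) → A) :
    vcirc α (vbracket α f g) h a
      = vcirc α (vcirc α f g) h a
        - ((-1 : ℤ) ^ (m * n)) • vcirc α (vcirc α g f) h (reindex (by omega) a) := by
  rw [← vcircLeftHom_apply, vbracket_eq_sub, map_sub, map_zsmul, vcircLeftHom_apply,
    vcircLeftHom_apply, vcirc_comp_reindex_left α (Nat.add_comm n m)]

lemma vcirc_vbracket_right (f : MultilinearMap R (fun _ : Fin (m + 1) => A) A)
    (g : (Fin (n + 1) → A) → A) (h : (Fin (p + 1) → A) → A)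
    (a : Fin (m + (n + p) + 1) → A) :
    vcirc α f (vbracket α g h) a
      = vcirc α f (vcirc α g h) a
        - ((-1 : ℤ) ^ (n * p)) • vcirc α f (vcirc α h g) (reindex (by omega) a) := by
  rw [← vcircRightHom_apply, vbracket_eq_sub, map_sub, map_zsmul, vcircRightHom_apply,
    vcircRightHom_apply, vcirc_comp_reindex_right α (Nat.add_comm p n)]

lemma vbracket_neg_left (f : (Fin (m + 1) → A) → A)
    (g : MultilinearMap R (fun _ : Fin (n + 1) => A) A) (a : Fin (m + n + 1) → A) :
    vbracket α (-f) g a = -vbracket α f g a := by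
  have hl : vcirc α (-f) g a = -vcirc α f g a := map_neg (vcircLeftHom α g a) f
  have hr (b) : vcirc α g (-f) b = -vcirc α g f b := map_neg (vcircRightHom α g b) f
  simp only [vbracket, hl, hr, smul_neg, neg_sub, sub_neg_eq_add]
  abel

lemma vbracket_neg_right (f : MultilinearMap R (fun _ : Fin (m + 1) => A) A)
    (g : (Fin (n + 1) → A) → A) (a : Fin (m + n + 1) → A) :
    vbracket α f (-g) a = -vbracket α f g a := by
  have hl : vcirc α f (-g) a = -vcirc α f g a := map_neg (vcircRightHom α f a) g
  have hr (b) : vcirc α (-g) f b = -vcirc α g f b := map_neg (vcircLeftHom α f b) g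
  simp only [vbracket, hl, hr, smul_neg, neg_sub, sub_neg_eq_add]
  abel

end Linearity

section PreLie

variable {R A : Type*} [CommSemiring R] [AddCommGroup A] [Module R A] (α : A → A) {m n p : ℕ}

lemma vcirc_vcirc_left_eq_sum (f : (Fin (m + 1) → A) → A) (g : (Fin (n + 1) → A) → A)
    (h : (Fin (p + 1) → A) → A) (a : Fin (m + n + p + 1) → A) :
    vcirc α (vcirc α f g) h a
      = ∑ x : Fin (m + n + 1) × Fin (m + 1),
          ((-1 : ℤ) ^ (p * x.1 + n * x.2)) • circI α x.1 (circI α x.2 f g) h a := by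
  rw [vcirc, Fintype.sum_prod_type]
  refine sum_congr rfl fun j _ => ?_
  change _ • ∑ i : Fin (m + 1), _ = _
  simp only [smul_sum, smul_smul, ← pow_add]
  rfl

lemma vcirc_vcirc_right_eq_sum (f : MultilinearMap R (fun _ : Fin (m + 1) => A) A)
    (g : (Fin (n + 1) → A) → A) (h : (Fin (p + 1) → A) → A)
    (a : Fin (m + (n + p) + 1) → A) :
    vcirc α f (vcirc α g h) a
      = ∑ x : Fin (m + 1) × Fin (n + 1),
          ((-1 : ℤ) ^ ((n + p) * x.1 + p * x.2)) • circI α x.1 f (circI α x.2 g h) a := by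
  rw [vcirc, Fintype.sum_prod_type]
  refine sum_congr rfl fun i _ => ?_
  simp only [circI_eq_update α i f, vcirc, ← f.toLinearMap_apply, map_sum, map_zsmul, smul_sum,
    smul_smul, ← pow_add]

lemma neg_one_pow_add_two_mul (a c : ℕ) : (-1 : ℤ) ^ (a + 2 * c) = (-1) ^ a := by
  rw [pow_add, pow_mul, neg_one_sq, one_pow, mul_one]

lemma sum_univ_eq_lt_add_nested_add_gt {M : Type*} [AddCommMonoid M] (k : ℕ)
    (F : Fin (m + k + 1) × Fin (m + 1) → M) :
    ∑ x, F x = ∑ x ∈ univ.filter (fun x => (x.1 : ℕ) < x.2), F x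
      + ∑ x ∈ univ.filter (fun x => (x.2 : ℕ) ≤ x.1 ∧ (x.1 : ℕ) ≤ x.2 + k), F x
      + ∑ x ∈ univ.filter (fun x => (x.2 : ℕ) + k < x.1), F x := by
  simp only [sum_filter, ← sum_add_distrib]
  refine sum_congr rfl fun x _ => ?_
  split_ifs <;> first | omega | simp

lemma sum_nested_eq_vcirc_vcirc (f : MultilinearMap R (fun _ : Fin (m + 1) => A) A)
    (g : (Fin (n + 1) → A) → A) (h : (Fin (p + 1) → A) → A)
    (a : Fin (m + n + p + 1) → A) :
    ∑ x ∈ univ.filter (fun x : Fin (m + n + 1) × Fin (m + 1) =>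
        (x.2 : ℕ) ≤ x.1 ∧ (x.1 : ℕ) ≤ x.2 + n),
      ((-1 : ℤ) ^ (p * x.1 + n * x.2)) • circI α x.1 (circI α x.2 f g) h a
      = vcirc α f (vcirc α g h) (reindex (by omega) a) := by
  rw [vcirc_vcirc_right_eq_sum]
  symm
  refine sum_bij (fun y _ => (⟨y.1 + y.2, by omega⟩, y.1)) ?_ ?_ ?_ ?_
  · intro y _
    simp only [mem_filter, mem_univ, true_and]
    omega
  · intro y _ y' _ hyy'
    simp only [Prod.mk.injEq, Fin.ext_iff] at hyy'
    ext <;> omega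
  · rintro ⟨j, i⟩ hx
    simp only [mem_filter, mem_univ, true_and] at hx
    refine ⟨(i, ⟨j - i, by omega⟩), mem_univ _, ?_⟩
    exact Prod.ext (Fin.ext (by dsimp only; omega)) rfl
  · rintro ⟨⟨i, hi⟩, ⟨q, hq⟩⟩ _
    rw [circI_circI_of_le α f g h i q (by omega) (by omega)]
    congr 1
    ring_nf

lemma sum_lt_eq_sum_gt (f : (Fin (m + 1) → A) → A) {g : (Fin (n + 1) → A) → A}
    {h : (Fin (p + 1) → A) → A} (hg : IsCompat α g) (hh : IsCompat α h)
    (a : Fin (m + n + p + 1) → A) :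
    ∑ x ∈ univ.filter (fun x : Fin (m + n + 1) × Fin (m + 1) => (x.1 : ℕ) < x.2),
      ((-1 : ℤ) ^ (p * x.1 + n * x.2)) • circI α x.1 (circI α x.2 f g) h a
      = ((-1 : ℤ) ^ (n * p)) • ∑ y ∈ univ.filter
          (fun y : Fin (m + p + 1) × Fin (m + 1) => (y.2 : ℕ) + p < y.1),
        ((-1 : ℤ) ^ (n * y.1 + p * y.2)) • circI α y.1 (circI α y.2 f h) g
          (reindex (by omega) a) := by
  rw [smul_sum]
  refine sum_bij (fun x hx => (⟨x.2 + p, by omega⟩,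
    ⟨x.1, by simp only [mem_filter, mem_univ, true_and] at hx; omega⟩)) ?_ ?_ ?_ ?_
  · intro x hx
    simp only [mem_filter, mem_univ, true_and] at hx ⊢
    omega
  · intro x _ x' _ hxx'
    simp only [Prod.mk.injEq, Fin.ext_iff] at hxx'
    ext <;> omega
  · rintro ⟨j, i⟩ hy
    simp only [mem_filter, mem_univ, true_and] at hy
    refine ⟨(⟨i, by omega⟩, ⟨j - p, by omega⟩), ?_, ?_⟩
    · simp only [mem_filter, mem_univ, true_and]
      omega
    · exact Prod.ext (Fin.ext (by dsimp only; omega)) rfl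
  · rintro ⟨⟨j, hj⟩, ⟨i, hi⟩⟩ hx
    simp only [mem_filter, mem_univ, true_and] at hx
    rw [circI_circI_of_lt α f hg hh i j (by omega) hx, smul_smul, ← pow_add]
    congr 1
    rw [show n * p + (n * (i + p) + p * j) = p * j + n * i + 2 * (n * p) by ring,
      neg_one_pow_add_two_mul]

theorem vcirc_rightPreLie (f : MultilinearMap R (fun _ : Fin (m + 1) => A) A)
    {g : (Fin (n + 1) → A) → A} {h : (Fin (p + 1) → A) → A} (hg : IsCompat α g)
    (hh : IsCompat α h) (a : Fin (m + n + p + 1) → A) :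
    vcirc α (vcirc α f g) h a - vcirc α f (vcirc α g h) (reindex (by omega) a)
      = ((-1 : ℤ) ^ (n * p)) • (vcirc α (vcirc α f h) g (reindex (by omega) a)
          - vcirc α f (vcirc α h g) (reindex (by omega) a)) := by
  have hgt := sum_lt_eq_sum_gt α f hh hg (reindex (by omega) a)
  rw [reindex_reindex, reindex_rfl, Nat.mul_comm p n] at hgt
  rw [vcirc_vcirc_left_eq_sum, vcirc_vcirc_left_eq_sum, sum_univ_eq_lt_add_nested_add_gt,
    sum_univ_eq_lt_add_nested_add_gt, sum_nested_eq_vcirc_vcirc,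
    sum_nested_eq_vcirc_vcirc, sum_lt_eq_sum_gt α f hg hh, hgt, reindex_reindex, smul_sub,
    smul_add, smul_add, smul_smul, ← mul_pow, neg_one_mul, neg_neg, one_pow, one_smul]
  abel

theorem vbracket_vbracket (f : MultilinearMap R (fun _ : Fin (m + 1) => A) A)
    (g : MultilinearMap R (fun _ : Fin (n + 1) => A) A)
    (h : MultilinearMap R (fun _ : Fin (p + 1) => A) A)
    (hf : IsCompat α f) (hg : IsCompat α g) (hh : IsCompat α h) (a : Fin (m + n + p + 1) → A) :
    vbracket α (vbracket α f g) h a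
      = vbracket α f (vbracket α g h) (reindex (by omega) a)
        + ((-1 : ℤ) ^ (n * p)) • vbracket α (vbracket α f h) g (reindex (by omega) a) := by
  have P₁ := vcirc_rightPreLie α f hg hh a
  have P₂ := vcirc_rightPreLie α g hf hh (reindex (by omega) a)
  have P₃ := vcirc_rightPreLie α h hf hg (reindex (by omega) a)
  rw [sub_eq_iff_eq_add] at P₁ P₂ P₃
  simp only [vbracket_apply, vcirc_vbracket_left, vcirc_vbracket_right, reindex_reindex]
    at P₁ P₂ P₃ ⊢
  rw [P₁, P₂, P₃]
  simp only [add_mul, mul_add, pow_add, Nat.mul_comm p n]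
  -- In each of the eight sign patterns the goal is linear in the twelve double composites.
  rcases neg_one_pow_eq_or ℤ (m * n) with hmn | hmn <;>
    rcases neg_one_pow_eq_or ℤ (m * p) with hmp | hmp <;>
    rcases neg_one_pow_eq_or ℤ (n * p) with hnp | hnp <;>
    simp only [hmn, hmp, hnp] <;> module

end PreLie

section Coboundary

variable {A : Type*} [AddCommGroup A]

lemma homDelta_succ_eq_neg_vbracket (μ : A → A → A) (α : A → A) {N : ℕ}
    (F : (Fin (N + 1) → A) → A) :
    homDelta μ α (N + 1) F = -vbracket α F (fun a : Fin 2 → A => μ (a 0) (a 1)) := by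
  funext a
  have hfirst : circI α 1 (fun a : Fin 2 → A => μ (a 0) (a 1)) F (reindex (by omega) a)
      = μ (α^[N] (a 0)) (F fun i => a i.succ) := by
    simp [circI, reindex, Fin.succ, Nat.add_comm]
  have hlast : circI α 0 (fun a : Fin 2 → A => μ (a 0) (a 1)) F (reindex (by omega) a)
      = μ (F fun i => a i.castSucc) (α^[N] (a (Fin.last (N + 1)))) := by
    simp [circI, reindex, Fin.last, Fin.castSucc, Fin.castAdd, Fin.castLE, Nat.add_comm]
  have hmiddle (i : Fin (N + 1)) : circI α i F (fun a : Fin 2 → A => μ (a 0) (a 1)) a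
      = F fun j => if (j : ℕ) < i then α (a j.castSucc)
          else if (j : ℕ) = i then μ (a j.castSucc) (a j.succ) else α (a j.succ) := by
    unfold circI
    congr 1
    funext j
    split_ifs <;> simp [Fin.succ, Fin.castSucc, Fin.castAdd, Fin.castLE, *]
  have hsplit : vcirc α (fun a : Fin 2 → A => μ (a 0) (a 1)) F (reindex (by omega) a)
      = μ (F fun i => a i.castSucc) (α^[N] (a (Fin.last (N + 1))))
        + ((-1 : ℤ) ^ N) • μ (α^[N] (a 0)) (F fun i => a i.succ) := by
    rw [vcirc, Fin.sum_univ_two, hfirst, hlast]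
    simp
  rw [homDelta, Pi.neg_apply, vbracket_apply, hsplit, vcirc]
  simp only [hmiddle, Nat.add_sub_cancel, mul_one, one_mul, pow_succ, mul_neg_one, neg_smul,
    sum_neg_distrib, neg_neg, smul_add, smul_smul, ← mul_pow, one_pow, one_smul]
  abel

end Coboundary

def mulCochain {K A : Type*} [CommSemiring K] [AddCommGroup A] [Module K A]
    (μ : A →ₗ[K] A →ₗ[K] A) : MultilinearMap K (fun _ : Fin 2 => A) A where
  toFun a := μ (a 0) (a 1)
  map_update_add' a i x y := by fin_cases i <;> simp
  map_update_smul' a i c x := by fin_cases i <;> simp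

/-- In a multiplicative hom-associative algebra, for `f ∈ C^{m+1}_α(A,A)` and
`g ∈ C^{n+1}_α(A,A)`, `δ_α [f,g]_α = (-1)^{(n+1)+1} [δ_α f, g]_α + [f, δ_α g]_α`. -/
theorem homDelta_bracket_Leibniz
    {K : Type*} [Field K] {A : Type*} [AddCommGroup A] [Module K A]
    (μ : A →ₗ[K] A →ₗ[K] A) (α : A →ₗ[K] A)
    (hmult : ∀ a b : A, α (μ a b) = μ (α a) (α b))
    (m n : ℕ)
    (f : MultilinearMap K (fun _ : Fin (m + 1) => A) A)
    (g : MultilinearMap K (fun _ : Fin (n + 1) => A) A)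
    (hf : IsCompat (⇑α) (⇑f)) (hg : IsCompat (⇑α) (⇑g)) :
    ∀ a : Fin (m + n + 2) → A,
      homDelta (fun x y => μ x y) (⇑α) (m + n + 1) (vbracket (⇑α) (⇑f) (⇑g)) a
        = ((-1 : ℤ) ^ (n + 2)) •
            vbracket (⇑α) (homDelta (fun x y => μ x y) (⇑α) (m + 1) (⇑f)) (⇑g)
              (reindex (by omega) a)
          + vbracket (⇑α) (⇑f) (homDelta (fun x y => μ x y) (⇑α) (n + 1) (⇑g)) a := by
  intro a
  have hμ : IsCompat α (mulCochain μ) := fun a => hmult (a 0) (a 1)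
  simp only [homDelta_succ_eq_neg_vbracket, Pi.neg_apply]
  change -vbracket α (vbracket α f g) (mulCochain μ) a
    = _ • vbracket α (-vbracket α f (mulCochain μ)) g _
      + vbracket α f (-vbracket α g (mulCochain μ)) a
  rw [vbracket_neg_left, vbracket_neg_right, vbracket_vbracket α f g (mulCochain μ) hf hg hμ,
    reindex_rfl, mul_one, pow_add, neg_one_sq, mul_one]
  module
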